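/- Let M be a closed oriented surface, λ ∈ C^∞(SM), and let G_λ = G + λV generate a generalized thermostat. Suppose p ∈ C^∞(SM) satisfies G(p) + HV(p)/k = 0 for a positive integer k, and K − H(λ) + λ²(k+1)²/(2k+1) ≤ 0 pointwise on SM. If u ∈ C^∞(SM) satisfies G_λ(u) = p, then p = 0 (and Hu = 0). -/
import Mathlib

set_option maxHeartbeats 1000000


/-- Let `M` be a closed oriented surface, `λ ∈ C^∞(SM)`, and let
`G_λ = G + λV` generate a generalized thermostat.  Suppose `p` satisfies
`G(p) + HV(p)/k = 0` for a positive integer `k`, and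
`K − H(λ) + λ²(k+1)²/(2k+1) ≤ 0` pointwise.  If `G_λ(u) = p`, then `p = 0` and
`Hu = 0`.  Integration over `SM` against the Liouville measure is modeled by a
linear functional `I` that is positive (and definite) on nonnegative functions;
`G` and `H` preserve the Liouville measure, encoded by skew-adjointness; the
Pestov integral identity of [DP2, eq. (13)] is assumed. -/
theorem stmt16 {SM : Type*}
    (I : (SM → ℝ) →ₗ[ℝ] ℝ)
    (G H V : (SM → ℝ) → (SM → ℝ))
    (K lam p u : SM → ℝ) (k : ℕ) (hk : 0 < k)
    (hIpos : ∀ f : SM → ℝ, (∀ z, 0 ≤ f z) → 0 ≤ I f)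
    (hIdef : ∀ f : SM → ℝ, (∀ z, 0 ≤ f z) → I f = 0 → f = 0)
    (hGskew : ∀ a b : SM → ℝ, I (fun z => G a z * b z) = -I (fun z => a z * G b z))
    (hHskew : ∀ a b : SM → ℝ, I (fun z => H a z * b z) = -I (fun z => a z * H b z))
    (hp : ∀ z, G p z + H (V p) z / (k : ℝ) = 0)
    (hcurv : ∀ z, K z - H lam z + lam z ^ 2 * ((k : ℝ) + 1) ^ 2 / (2 * (k : ℝ) + 1) ≤ 0)
    (hPestov :
      2 * I (fun z => H u z * V (fun w => G u w + lam w * V u w) z) =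
        I (fun z => (G u z + lam z * V u z) ^ 2) + I (fun z => (H u z) ^ 2)
          - I (fun z => (K z - H lam z + lam z ^ 2) * (V u z) ^ 2))
    (hu : ∀ z, G u z + lam z * V u z = p z) :
    (∀ z, p z = 0) ∧ (∀ z, H u z = 0) := by
  have hkpos : (0:ℝ) < (k:ℝ) := by exact_mod_cast hk
  have h2k : (0:ℝ) < 2*(k:ℝ)+1 := by linarith
  have h2k' : (2*(k:ℝ)+1) ≠ 0 := h2k.ne'
  -- rewrite Pestov using G_λ u = p
  have hglu : (fun w => G u w + lam w * V u w) = p := funext hu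
  have e1 : (fun z => (G u z + lam z * V u z) ^ 2) = fun z => p z ^ 2 :=
    funext fun z => by rw [hu]
  rw [hglu, e1] at hPestov
  -- H(Vp) = -k * Gp
  have hHVp : ∀ z, H (V p) z = -(k:ℝ) * G p z := by
    intro z
    have h := hp z
    field_simp at h
    linarith
  -- I(Hu · Vp) = -k · I(Gu · p)
  have hsm : (fun z => u z * H (V p) z) = (-(k:ℝ)) • (fun z => u z * G p z) :=
    funext fun z => by
      show u z * H (V p) z = -(k:ℝ) * (u z * G p z)
      rw [hHVp z]; ring
  have hB : I (fun z => H u z * V p z) = -(k:ℝ) * I (fun z => G u z * p z) := by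
    rw [hHskew, hsm, map_smul, smul_eq_mul]
    have hg := hGskew u p
    rw [hg]; ring
  -- I(Gu · p) = I(p²) − I(λ·Vu·p)
  have hC : I (fun z => G u z * p z) =
      I (fun z => p z ^ 2) - I (fun z => lam z * V u z * p z) := by
    have hd : (fun z => G u z * p z) =
        (fun z => p z ^ 2) - (fun z => lam z * V u z * p z) := funext fun z => by
      show G u z * p z = p z ^ 2 - lam z * V u z * p z
      have h := hu z
      linear_combination p z * h
    rw [hd, map_sub]
  rw [hB, hC] at hPestov
  set A := I (fun z => p z ^ 2) with hA
  set B := I (fun z => lam z * V u z * p z) with hBdef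
  set C := I (fun z => (H u z) ^ 2) with hCdef
  set D := I (fun z => (K z - H lam z + lam z ^ 2) * (V u z) ^ 2) with hDdef
  -- master identity
  have hmaster : (2*(k:ℝ)+1) * A - 2*(k:ℝ) * B + C - D = 0 := by
    linear_combination (-1 : ℝ) * hPestov
  -- the nonnegative function F
  set F : SM → ℝ := fun z =>
    (2*(k:ℝ)+1) * (p z - (k:ℝ) * lam z * V u z / (2*(k:ℝ)+1)) ^ 2 + (H u z) ^ 2
      - (K z - H lam z + lam z ^ 2 * ((k:ℝ) + 1) ^ 2 / (2 * (k:ℝ) + 1)) * (V u z) ^ 2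
    with hFdef
  have hFdec : F = (2*(k:ℝ)+1) • (fun z => p z ^ 2)
      + (-(2*(k:ℝ))) • (fun z => lam z * V u z * p z)
      + (fun z => (H u z) ^ 2)
      - (fun z => (K z - H lam z + lam z ^ 2) * (V u z) ^ 2) := by
    funext z
    show (2*(k:ℝ)+1) * (p z - (k:ℝ) * lam z * V u z / (2*(k:ℝ)+1)) ^ 2 + (H u z) ^ 2
      - (K z - H lam z + lam z ^ 2 * ((k:ℝ) + 1) ^ 2 / (2 * (k:ℝ) + 1)) * (V u z) ^ 2
      = (2*(k:ℝ)+1) * (p z ^ 2) + (-(2*(k:ℝ))) * (lam z * V u z * p z)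
        + (H u z) ^ 2 - (K z - H lam z + lam z ^ 2) * (V u z) ^ 2
    field_simp
    ring
  have hIF : I F = 0 := by
    rw [hFdec, map_sub, map_add, map_add, map_smul, map_smul, smul_eq_mul, smul_eq_mul]
    linear_combination hmaster
  have hFnn : ∀ z, 0 ≤ F z := by
    intro z
    have h1 := mul_nonneg h2k.le
      (sq_nonneg (p z - (k:ℝ) * lam z * V u z / (2*(k:ℝ)+1)))
    have h2 := sq_nonneg (H u z)
    have h3 := mul_nonneg (neg_nonneg.2 (hcurv z)) (sq_nonneg (V u z))
    simp only [hFdef]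
    nlinarith [h1, h2, h3]
  have hF0 : F = 0 := hIdef F hFnn hIF
  -- Hu = 0 pointwise
  have hH0 : ∀ z, H u z = 0 := by
    intro z
    have hz := congrFun hF0 z
    simp only [hFdef, Pi.zero_apply] at hz
    have h1 := mul_nonneg h2k.le
      (sq_nonneg (p z - (k:ℝ) * lam z * V u z / (2*(k:ℝ)+1)))
    have h3 := mul_nonneg (neg_nonneg.2 (hcurv z)) (sq_nonneg (V u z))
    have hsq : (H u z) ^ 2 = 0 := by nlinarith [h1, h3]
    exact sq_eq_zero_iff.mp hsq
  -- now go back to Pestov with Hu = 0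
  have hC0 : C = 0 := by
    have : (fun z => (H u z) ^ 2) = (0 : SM → ℝ) := funext fun z => by
      show (H u z) ^ 2 = 0; rw [hH0 z]; ring
    rw [hCdef, this, map_zero]
  have hIGp0 : I (fun z => G u z * p z) = 0 := by
    have hL : (fun z => H u z * V p z) = (0 : SM → ℝ) := funext fun z => by
      show H u z * V p z = 0; rw [hH0 z]; ring
    have hB' := hB
    rw [hL, map_zero] at hB'
    rcases mul_eq_zero.mp hB'.symm with h | h
    · exfalso; linarith [neg_eq_zero.mp h]
    · exact h
  have hAB : A - B = 0 := by rw [← hC]; exact hIGp0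
  -- hence A = D
  have hAD : A = D := by
    rw [hAB] at hPestov
    linarith [hPestov, hC0]
  -- D ≤ 0 since the integrand is nonpositive
  have hDle : D ≤ 0 := by
    have hnn : ∀ z, 0 ≤ -((K z - H lam z + lam z ^ 2) * (V u z) ^ 2) := by
      intro z
      have key : lam z ^ 2 ≤ lam z ^ 2 * ((k:ℝ) + 1) ^ 2 / (2 * (k:ℝ) + 1) := by
        rw [le_div_iff₀ h2k]
        have hcomp : lam z ^ 2 * (2*(k:ℝ)+1) + (lam z * (k:ℝ)) ^ 2
            = lam z ^ 2 * ((k:ℝ)+1) ^ 2 := by ring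
        linarith [sq_nonneg (lam z * (k:ℝ))]
      have hle : K z - H lam z + lam z ^ 2 ≤ 0 := by linarith [hcurv z]
      have := mul_nonpos_of_nonpos_of_nonneg hle (sq_nonneg (V u z))
      linarith
    have hpos := hIpos (fun z => -((K z - H lam z + lam z ^ 2) * (V u z) ^ 2)) hnn
    have hneg : (fun z => -((K z - H lam z + lam z ^ 2) * (V u z) ^ 2))
        = -(fun z => (K z - H lam z + lam z ^ 2) * (V u z) ^ 2) := rfl
    rw [hneg, map_neg] at hpos
    rw [hDdef]
    linarith
  have hAge : 0 ≤ A := hIpos _ (fun z => sq_nonneg (p z))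
  have hA0 : A = 0 := le_antisymm (by linarith) hAge
  have hp2 : (fun z => p z ^ 2) = 0 := hIdef _ (fun z => sq_nonneg (p z)) hA0
  refine ⟨fun z => ?_, hH0⟩
  have := congrFun hp2 z
  simp only [Pi.zero_apply] at this
  exact sq_eq_zero_iff.mp this
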